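/- Let V be a Banach space, T > 0, z₁ > 1 and l ≥ 1. Let h ∈ 𝒞𝒞_{3,l}(V) satisfy δ₁h = 0 and M := sup_{τ∈[0,T]^l} ‖h(·,τ)‖_{z₁} < ∞, where h(·,τ) ∈ 𝒞₃(V) is the slice of h at fixed second-group arguments τ. Then there exists a unique Λ₁h ∈ 𝒞𝒞_{2,l}(V) such that δ₁(Λ₁h) = h and, for each τ, ‖(Λ₁h)(·,τ)‖_ν < ∞ for some ν > 1; moreover ‖(Λ₁h)(·,τ)‖_{z₁} ≤ (2^{z₁} − 2)^{−1} ‖h(·,τ)‖_{z₁} for every τ ∈ [0,T]^l. -/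

import Mathlib

/-!
The slice `r(·,τ)` is the dyadic sewing of `f = h(·,·,·,τ)`: `sew f t s = ∑ₙ sewRow f n t s`, where
the `n`-th row sums `f a ((a + b) / 2) b` over the `2ⁿ` dyadic subintervals `[a, b]` of `[t, s]`.
A bound `‖f x y w‖ ≤ S D^z` whenever both gaps are at most `D` makes the rows decay like
`(2 / 2^z)ⁿ`, which produces the constant `(2^z - 2)⁻¹`.

Since `δf = 0`, `f t u s = g t s - g t u - g u s` for `g a b = -f 0 a b`, and `I = g - sew f` is
additive at midpoints and additive up to `O(D^z)`. A midpoint-additive function of size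
`O(|a - b|^z)` with `z > 1` vanishes; applied to `I a b` minus the sum of `I` over `d` equal pieces
of `[a, b]`, this makes `I` additive at the rational points of `[a, b]`, hence, by continuity,
additive. So `sew f` has the same coboundary as `g`, namely `f`. Uniqueness is the same vanishing
argument applied to the difference of two solutions.
-/

open Set Filter Topology

def cube (T : ℝ) (l : ℕ) : Set (Fin l → ℝ) := {t | ∀ j, t j ∈ Set.Icc 0 T}

lemma add_div_two_mem_Icc {T a b : ℝ} (ha : a ∈ Icc 0 T) (hb : b ∈ Icc 0 T) :
    (a + b) / 2 ∈ Icc 0 T :=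
  ⟨by linarith [ha.1, hb.1], by linarith [ha.2, hb.2]⟩

lemma abs_sub_add_div_two (a b : ℝ) : |a - (a + b) / 2| = |a - b| / 2 := by
  rw [show a - (a + b) / 2 = (a - b) / 2 by ring, abs_div, abs_two]

lemma abs_add_div_two_sub (a b : ℝ) : |(a + b) / 2 - b| = |a - b| / 2 := by
  rw [show (a + b) / 2 - b = (a - b) / 2 by ring, abs_div, abs_two]

lemma abs_sub_le_of_mem_Icc {T a b : ℝ} (ha : a ∈ Icc 0 T) (hb : b ∈ Icc 0 T) : |a - b| ≤ T :=
  abs_sub_le_iff.2 ⟨by linarith [ha.2, hb.1], by linarith [ha.1, hb.2]⟩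

lemma two_lt_two_rpow {z : ℝ} (hz : 1 < z) : (2 : ℝ) < 2 ^ z := by
  simpa using Real.rpow_lt_rpow_of_exponent_lt one_lt_two hz

lemma two_div_two_rpow_lt_one {z : ℝ} (hz : 1 < z) : 2 / (2 : ℝ) ^ z < 1 :=
  (div_lt_one (by positivity)).2 (two_lt_two_rpow hz)

lemma rpow_mul_rpow_le_rpow {x y D ρ z : ℝ} (hx : 0 ≤ x) (hxD : x ≤ D) (hy : 0 ≤ y)
    (hyD : y ≤ D) (hρ : 0 ≤ ρ) (hρz : ρ ≤ z) (hz : 0 < z) : x ^ ρ * y ^ (z - ρ) ≤ D ^ z := by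
  have hD : 0 ≤ D := hx.trans hxD
  calc x ^ ρ * y ^ (z - ρ) ≤ D ^ ρ * D ^ (z - ρ) := by gcongr
    _ = D ^ z := by rw [← Real.rpow_add' hD (by linarith), add_sub_cancel]

lemma rpow_le_mul_rpow_of_le {x T μ z : ℝ} (hx : 0 ≤ x) (hxT : x ≤ T) (hμ : 0 < μ)
    (hμz : μ ≤ z) : x ^ z ≤ T ^ (z - μ) * x ^ μ := by
  calc x ^ z = x ^ (z - μ) * x ^ μ := by
        rw [← Real.rpow_add' hx (by linarith), sub_add_cancel]
    _ ≤ T ^ (z - μ) * x ^ μ := by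
        gcongr

section

variable {V : Type*} [NormedAddCommGroup V] {T z S : ℝ}

def GapBounded (T z S : ℝ) (f : ℝ → ℝ → ℝ → V) : Prop :=
  ∀ x ∈ Icc 0 T, ∀ y ∈ Icc 0 T, ∀ w ∈ Icc 0 T, ∀ D : ℝ,
    |x - y| ≤ D → |y - w| ≤ D → ‖f x y w‖ ≤ S * D ^ z

def MidpointAdditiveOn (T : ℝ) (I : ℝ → ℝ → V) : Prop :=
  ∀ a ∈ Icc 0 T, ∀ b ∈ Icc 0 T, I a b = I a ((a + b) / 2) + I ((a + b) / 2) b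

lemma GapBounded.mono {f : ℝ → ℝ → ℝ → V} {S' : ℝ} (hf : GapBounded T z S f) (hS : S ≤ S') :
    GapBounded T z S' f := fun x hx y hy w hw D hxy hyw =>
  (hf x hx y hy w hw D hxy hyw).trans <|
    mul_le_mul_of_nonneg_right hS (Real.rpow_nonneg ((abs_nonneg _).trans hxy) _)

lemma gapBounded_of_decomposition {ι : Type*} [Fintype ι] {f : ℝ → ℝ → ℝ → V}
    (g : ι → ℝ → ℝ → ℝ → V) (C ρ : ι → ℝ) (hC : ∀ k, 0 ≤ C k) (hρ : ∀ k, ρ k ∈ Ioo 0 z)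
    (hfg : ∀ t u s : ℝ, t ∈ Icc 0 T → u ∈ Icc 0 T → s ∈ Icc 0 T → f t u s = ∑ k, g k t u s)
    (hg : ∀ k, ∀ t u s : ℝ, t ∈ Icc 0 T → u ∈ Icc 0 T → s ∈ Icc 0 T →
      ‖g k t u s‖ ≤ C k * |t - u| ^ (ρ k) * |u - s| ^ (z - ρ k)) :
    GapBounded T z (∑ k, C k) f := by
  intro x hx y hy w hw D hxy hyw
  rw [hfg x y w hx hy hw, Finset.sum_mul]
  refine (norm_sum_le _ _).trans (Finset.sum_le_sum fun k _ => ?_)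
  calc ‖g k x y w‖ ≤ C k * (|x - y| ^ ρ k * |y - w| ^ (z - ρ k)) := by
        rw [← mul_assoc]; exact hg k x y w hx hy hw
    _ ≤ C k * D ^ z := by
        gcongr ?_ * ?_
        · exact hC k
        · exact rpow_mul_rpow_le_rpow (abs_nonneg _) hxy (abs_nonneg _) hyw (hρ k).1.le
            (hρ k).2.le ((hρ k).1.trans (hρ k).2)

lemma MidpointAdditiveOn.apply_self {I : ℝ → ℝ → V} (hI : MidpointAdditiveOn T I) {a : ℝ}
    (ha : a ∈ Icc 0 T) : I a a = 0 := by
  have := hI a ha a ha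
  rw [add_self_div_two] at this
  simpa using this

/-- Halving the interval `n` times shows `‖G a b‖ ≤ K |a - b|^z (2 / 2^z)^n`. -/
lemma MidpointAdditiveOn.eq_zero {G : ℝ → ℝ → V} {K : ℝ} (hG : MidpointAdditiveOn T G)
    (hz : 1 < z) (hGK : ∀ a ∈ Icc 0 T, ∀ b ∈ Icc 0 T, ‖G a b‖ ≤ K * |a - b| ^ z)
    {a b : ℝ} (ha : a ∈ Icc 0 T) (hb : b ∈ Icc 0 T) : G a b = 0 := by
  have key : ∀ n : ℕ, ∀ a ∈ Icc 0 T, ∀ b ∈ Icc 0 T,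
      ‖G a b‖ ≤ K * |a - b| ^ z * (2 / 2 ^ z) ^ n := by
    intro n
    induction n with
    | zero => simpa using hGK
    | succ n ih =>
      intro a ha b hb
      have hm := add_div_two_mem_Icc ha hb
      calc ‖G a b‖ ≤ ‖G a ((a + b) / 2)‖ + ‖G ((a + b) / 2) b‖ := by
            rw [hG a ha b hb]; exact norm_add_le _ _
        _ ≤ K * (|a - b| / 2) ^ z * (2 / 2 ^ z) ^ n + K * (|a - b| / 2) ^ z * (2 / 2 ^ z) ^ n := by
            have h1 := ih a ha _ hm
            have h2 := ih _ hm b hb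
            rw [abs_sub_add_div_two] at h1
            rw [abs_add_div_two_sub] at h2
            exact add_le_add h1 h2
        _ = K * |a - b| ^ z * (2 / 2 ^ z) ^ (n + 1) := by
            rw [Real.div_rpow (abs_nonneg _) zero_le_two]
            ring
  have hq := two_div_two_rpow_lt_one hz
  have hlim : Tendsto (fun n : ℕ => K * |a - b| ^ z * (2 / 2 ^ z) ^ n) atTop (𝓝 0) := by
    simpa using (tendsto_pow_atTop_nhds_zero_of_lt_one (by positivity) hq).const_mul
      (K * |a - b| ^ z)
  exact norm_le_zero_iff.1 (ge_of_tendsto' hlim fun n => key n a ha b hb)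

noncomputable def sewRow (f : ℝ → ℝ → ℝ → V) : ℕ → ℝ → ℝ → V
  | 0, t, s => f t ((t + s) / 2) s
  | n + 1, t, s => sewRow f n t ((t + s) / 2) + sewRow f n ((t + s) / 2) s

noncomputable def sew (f : ℝ → ℝ → ℝ → V) (t s : ℝ) : V := ∑' n, sewRow f n t s

section Sewing

variable {f : ℝ → ℝ → ℝ → V} {t s : ℝ}

lemma GapBounded.norm_sewRow_le (hf : GapBounded T z S f) (n : ℕ) (ht : t ∈ Icc 0 T)
    (hs : s ∈ Icc 0 T) : ‖sewRow f n t s‖ ≤ S * |t - s| ^ z / 2 ^ z * (2 / 2 ^ z) ^ n := by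
  induction n generalizing t s with
  | zero =>
    have h := hf t ht _ (add_div_two_mem_Icc ht hs) s hs (|t - s| / 2)
      (abs_sub_add_div_two t s).le (abs_add_div_two_sub t s).le
    rw [Real.div_rpow (abs_nonneg _) zero_le_two] at h
    simpa [sewRow, mul_div_assoc] using h
  | succ n ih =>
    have hm := add_div_two_mem_Icc ht hs
    calc ‖sewRow f (n + 1) t s‖
        ≤ ‖sewRow f n t ((t + s) / 2)‖ + ‖sewRow f n ((t + s) / 2) s‖ := norm_add_le _ _
      _ ≤ S * (|t - s| / 2) ^ z / 2 ^ z * (2 / 2 ^ z) ^ n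
          + S * (|t - s| / 2) ^ z / 2 ^ z * (2 / 2 ^ z) ^ n := by
          have h1 := ih ht hm
          have h2 := ih hm hs
          rw [abs_sub_add_div_two] at h1
          rw [abs_add_div_two_sub] at h2
          exact add_le_add h1 h2
      _ = S * |t - s| ^ z / 2 ^ z * (2 / 2 ^ z) ^ (n + 1) := by
          rw [Real.div_rpow (abs_nonneg _) zero_le_two]
          ring

lemma GapBounded.norm_sew_le (hz : 1 < z) (hf : GapBounded T z S f) (ht : t ∈ Icc 0 T)
    (hs : s ∈ Icc 0 T) : ‖sew f t s‖ ≤ (2 ^ z - 2)⁻¹ * S * |t - s| ^ z := by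
  have hq := two_div_two_rpow_lt_one hz
  refine (tsum_of_norm_bounded ((hasSum_geometric_of_lt_one (by positivity) hq).mul_left _)
    fun n => hf.norm_sewRow_le n ht hs).trans_eq ?_
  field_simp

lemma sew_self (h : f t t t = 0) : sew f t t = 0 := by
  have hrow : ∀ n, sewRow f n t t = 0 := by
    intro n
    induction n with
    | zero => simpa [sewRow] using h
    | succ n ih => simp [sewRow, ih]
  simp [sew, hrow]

lemma sew_eq_zero (h : ∀ x ∈ Icc 0 T, ∀ y ∈ Icc 0 T, ∀ w ∈ Icc 0 T, f x y w = 0)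
    (ht : t ∈ Icc 0 T) (hs : s ∈ Icc 0 T) : sew f t s = 0 := by
  have hrow : ∀ n, ∀ t ∈ Icc 0 T, ∀ s ∈ Icc 0 T, sewRow f n t s = 0 := by
    intro n
    induction n with
    | zero => intro t ht s hs; exact h t ht _ (add_div_two_mem_Icc ht hs) s hs
    | succ n ih =>
      intro t ht s hs
      have hm := add_div_two_mem_Icc ht hs
      simp [sewRow, ih t ht _ hm, ih _ hm s hs]
  simp [sew, fun n => hrow n t ht s hs]

variable [CompleteSpace V]

lemma GapBounded.summable_sewRow (hz : 1 < z) (hf : GapBounded T z S f) (ht : t ∈ Icc 0 T)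
    (hs : s ∈ Icc 0 T) : Summable fun n => sewRow f n t s :=
  .of_norm_bounded ((summable_geometric_of_lt_one (by positivity)
    (two_div_two_rpow_lt_one hz)).mul_left _) fun n => hf.norm_sewRow_le n ht hs

lemma GapBounded.sew_eq_add_sew (hz : 1 < z) (hf : GapBounded T z S f) (ht : t ∈ Icc 0 T)
    (hs : s ∈ Icc 0 T) :
    sew f t s = f t ((t + s) / 2) s + sew f t ((t + s) / 2) + sew f ((t + s) / 2) s := by
  have hm := add_div_two_mem_Icc ht hs
  rw [sew, (hf.summable_sewRow hz ht hs).tsum_eq_zero_add, add_assoc, sew, sew,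
    ← (hf.summable_sewRow hz ht hm).tsum_add (hf.summable_sewRow hz hm hs)]
  rfl

end Sewing

lemma ContinuousOn.slice {X P Y : Type*} [TopologicalSpace X] [TopologicalSpace P]
    [TopologicalSpace Y] {g : X × P → Y} {A : Set X} {K : Set P} (hg : ContinuousOn g (A ×ˢ K))
    {p : P} (hp : p ∈ K) : ContinuousOn (fun x => g (x, p)) A :=
  hg.comp (continuous_id.prodMk continuous_const).continuousOn fun _ hx => ⟨hx, hp⟩

lemma continuousOn_sewRow {P : Type*} [TopologicalSpace P] {K : Set P}
    {f : ℝ → ℝ → ℝ → P → V}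
    (hf : ContinuousOn (fun q : (ℝ × ℝ × ℝ) × P => f q.1.1 q.1.2.1 q.1.2.2 q.2)
      ((Icc 0 T ×ˢ Icc 0 T ×ˢ Icc 0 T) ×ˢ K)) (n : ℕ) :
    ContinuousOn (fun q : (ℝ × ℝ) × P => sewRow (fun x y w => f x y w q.2) n q.1.1 q.1.2)
      ((Icc 0 T ×ˢ Icc 0 T) ×ˢ K) := by
  induction n with
  | zero =>
    exact hf.comp (Continuous.continuousOn (f := fun q : (ℝ × ℝ) × P =>
      ((q.1.1, (q.1.1 + q.1.2) / 2, q.1.2), q.2)) (by fun_prop)) fun q hq =>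
      ⟨⟨hq.1.1, add_div_two_mem_Icc hq.1.1 hq.1.2, hq.1.2⟩, hq.2⟩
  | succ n ih =>
    refine (ih.comp (Continuous.continuousOn (f := fun q : (ℝ × ℝ) × P =>
      ((q.1.1, (q.1.1 + q.1.2) / 2), q.2)) (by fun_prop)) fun q hq => ?_).add
      (ih.comp (Continuous.continuousOn (f := fun q : (ℝ × ℝ) × P =>
      (((q.1.1 + q.1.2) / 2, q.1.2), q.2)) (by fun_prop)) fun q hq => ?_)
    · exact ⟨⟨hq.1.1, add_div_two_mem_Icc hq.1.1 hq.1.2⟩, hq.2⟩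
    · exact ⟨⟨add_div_two_mem_Icc hq.1.1 hq.1.2, hq.1.2⟩, hq.2⟩

lemma continuousOn_sew [CompleteSpace V] {P : Type*} [TopologicalSpace P] {K : Set P}
    {f : ℝ → ℝ → ℝ → P → V} (hz : 1 < z)
    (hf : ContinuousOn (fun q : (ℝ × ℝ × ℝ) × P => f q.1.1 q.1.2.1 q.1.2.2 q.2)
      ((Icc 0 T ×ˢ Icc 0 T ×ˢ Icc 0 T) ×ˢ K))
    (hS : ∀ p ∈ K, GapBounded T z S fun x y w => f x y w p) :
    ContinuousOn (fun q : (ℝ × ℝ) × P => sew (fun x y w => f x y w q.2) q.1.1 q.1.2)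
      ((Icc 0 T ×ˢ Icc 0 T) ×ˢ K) := by
  refine continuousOn_tsum (continuousOn_sewRow hf)
    ((summable_geometric_of_lt_one (by positivity) (two_div_two_rpow_lt_one hz)).mul_left
      (|S| * T ^ z / 2 ^ z)) fun n q hq => ?_
  refine ((hS q.2 hq.2).norm_sewRow_le n hq.1.1 hq.1.2).trans ?_
  have hT := abs_sub_le_of_mem_Icc hq.1.1 hq.1.2
  gcongr
  exact le_abs_self S

noncomputable def gridPoint (a b : ℝ) (d k : ℕ) : ℝ := a + k * (b - a) / d

section Grid

variable {a b : ℝ} {d k : ℕ}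

@[simp] lemma gridPoint_zero : gridPoint a b d 0 = a := by simp [gridPoint]

lemma gridPoint_self (hd : d ≠ 0) : gridPoint a b d d = b := by
  have : (d : ℝ) ≠ 0 := by exact_mod_cast hd
  simp only [gridPoint]
  field_simp
  ring

lemma sub_gridPoint (a b : ℝ) (d k : ℕ) : a - gridPoint a b d k = k / d * (a - b) := by
  simp only [gridPoint]; ring

lemma gridPoint_sub_gridPoint_succ (a b : ℝ) (d k : ℕ) :
    gridPoint a b d k - gridPoint a b d (k + 1) = (a - b) / d := by
  simp only [gridPoint]; push_cast; ring

lemma abs_sub_gridPoint_le (hk : k ≤ d) : |a - gridPoint a b d k| ≤ |a - b| := by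
  rw [sub_gridPoint, abs_mul]
  refine mul_le_of_le_one_left (abs_nonneg _) ?_
  rw [abs_of_nonneg (by positivity)]
  exact div_le_one_of_le₀ (by exact_mod_cast hk) (Nat.cast_nonneg d)

lemma abs_gridPoint_sub_gridPoint_succ_le (hd : d ≠ 0) :
    |gridPoint a b d k - gridPoint a b d (k + 1)| ≤ |a - b| := by
  rw [gridPoint_sub_gridPoint_succ, abs_div, Nat.abs_cast]
  exact div_le_self (abs_nonneg _) (by exact_mod_cast Nat.one_le_iff_ne_zero.2 hd)

lemma gridPoint_mem_Icc {T : ℝ} (ha : a ∈ Icc 0 T) (hb : b ∈ Icc 0 T) (hk : k ≤ d) :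
    gridPoint a b d k ∈ Icc 0 T := by
  have hθ : (k / d : ℝ) ∈ Icc 0 1 :=
    ⟨by positivity, div_le_one_of_le₀ (by exact_mod_cast hk) (Nat.cast_nonneg d)⟩
  convert (convex_Icc (0 : ℝ) T).add_smul_sub_mem ha hb hθ using 1
  simp only [gridPoint, smul_eq_mul]; ring

lemma gridPoint_two_mul (hd : d ≠ 0) : gridPoint a b (2 * d) (2 * k) = gridPoint a b d k := by
  have : (d : ℝ) ≠ 0 := by exact_mod_cast hd
  simp only [gridPoint]; push_cast; field_simp

lemma gridPoint_two_mul_add_one (hd : d ≠ 0) :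
    gridPoint a b (2 * d) (2 * k + 1)
      = (gridPoint a b d k + gridPoint a b d (k + 1)) / 2 := by
  have : (d : ℝ) ≠ 0 := by exact_mod_cast hd
  simp only [gridPoint]; push_cast; field_simp; ring

lemma gridPoint_two_mul_left (hd : d ≠ 0) :
    gridPoint a b (2 * d) k = gridPoint a ((a + b) / 2) d k := by
  have : (d : ℝ) ≠ 0 := by exact_mod_cast hd
  simp only [gridPoint]; push_cast; field_simp; ring

lemma gridPoint_two_mul_right (hd : d ≠ 0) :
    gridPoint a b (2 * d) (d + k) = gridPoint ((a + b) / 2) b d k := by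
  have : (d : ℝ) ≠ 0 := by exact_mod_cast hd
  simp only [gridPoint]; push_cast; field_simp; ring

lemma gridPoint_gridPoint_left {j : ℕ} (hj : j ≠ 0) (hd : d ≠ 0) :
    gridPoint a (gridPoint a b d j) j k = gridPoint a b d k := by
  have : (d : ℝ) ≠ 0 := by exact_mod_cast hd
  have : (j : ℝ) ≠ 0 := by exact_mod_cast hj
  simp only [gridPoint]; field_simp; ring

lemma gridPoint_gridPoint_right {j : ℕ} (hjd : j < d) :
    gridPoint (gridPoint a b d j) b (d - j) k = gridPoint a b d (j + k) := by
  have : (d : ℝ) ≠ 0 := by exact_mod_cast (Nat.zero_lt_of_lt hjd).ne'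
  have : ((d - j : ℕ) : ℝ) ≠ 0 := by exact_mod_cast (Nat.sub_pos_of_lt hjd).ne'
  simp only [gridPoint] at *
  rw [Nat.cast_sub hjd.le] at *
  push_cast
  field_simp
  ring

end Grid

lemma Finset.sum_range_two_mul {M : Type*} [AddCommMonoid M] (f : ℕ → M) (n : ℕ) :
    ∑ k ∈ Finset.range (2 * n), f k = ∑ k ∈ Finset.range n, (f (2 * k) + f (2 * k + 1)) := by
  induction n with
  | zero => simp
  | succ n ih =>
    rw [show 2 * (n + 1) = 2 * n + 1 + 1 by ring, Finset.sum_range_succ, Finset.sum_range_succ,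
      ih, Finset.sum_range_succ, add_assoc]

section Additivity

variable {I : ℝ → ℝ → V} {K : ℝ} {a b : ℝ}

lemma MidpointAdditiveOn.sub {J : ℝ → ℝ → V} (hI : MidpointAdditiveOn T I)
    (hJ : MidpointAdditiveOn T J) : MidpointAdditiveOn T fun a b => I a b - J a b :=
  fun a ha b hb => by
    beta_reduce
    rw [hI a ha b hb, hJ a ha b hb]
    abel

lemma MidpointAdditiveOn.add_swap (hI : MidpointAdditiveOn T I) :
    MidpointAdditiveOn T fun a b => I a b + I b a := fun a ha b hb => by
  have h := hI b hb a ha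
  rw [add_comm b a] at h
  beta_reduce
  rw [hI a ha b hb, h]
  abel

lemma MidpointAdditiveOn.sum_gridPoint (hI : MidpointAdditiveOn T I) (d : ℕ) :
    MidpointAdditiveOn T fun a b =>
      ∑ k ∈ Finset.range d, I (gridPoint a b d k) (gridPoint a b d (k + 1)) := by
  intro a ha b hb
  rcases eq_or_ne d 0 with rfl | hd
  · simp
  beta_reduce
  let y := gridPoint a b (2 * d)
  have hhalves : ∀ k ∈ Finset.range d, I (gridPoint a b d k) (gridPoint a b d (k + 1))
      = I (y (2 * k)) (y (2 * k + 1)) + I (y (2 * k + 1)) (y (2 * k + 1 + 1)) := by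
    intro k hk
    rw [Finset.mem_range] at hk
    rw [show 2 * k + 1 + 1 = 2 * (k + 1) by ring]
    simp only [y]
    rw [gridPoint_two_mul hd, gridPoint_two_mul hd, gridPoint_two_mul_add_one hd]
    exact hI _ (gridPoint_mem_Icc ha hb hk.le) _ (gridPoint_mem_Icc ha hb hk)
  rw [Finset.sum_congr rfl hhalves, ← Finset.sum_range_two_mul fun j => I (y j) (y (j + 1)),
    two_mul, Finset.sum_range_add]
  congr 1
  · refine Finset.sum_congr rfl fun k _ => ?_
    simp only [y]
    rw [gridPoint_two_mul_left hd, gridPoint_two_mul_left hd]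
  · refine Finset.sum_congr rfl fun k _ => ?_
    simp only [y]
    rw [add_assoc, gridPoint_two_mul_right hd, gridPoint_two_mul_right hd]

lemma MidpointAdditiveOn.norm_sub_sum_gridPoint_le (hI : MidpointAdditiveOn T I)
    (hK : GapBounded T z K fun a b c => I a c - I a b - I b c) {d : ℕ} (hd : d ≠ 0)
    (ha : a ∈ Icc 0 T) (hb : b ∈ Icc 0 T) :
    ‖I a b - ∑ k ∈ Finset.range d, I (gridPoint a b d k) (gridPoint a b d (k + 1))‖
      ≤ d * K * |a - b| ^ z := by
  set x := gridPoint a b d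
  have htelescope : ∀ j ≤ d,
      ‖I a (x j) - ∑ k ∈ Finset.range j, I (x k) (x (k + 1))‖ ≤ j * K * |a - b| ^ z := by
    intro j
    induction j with
    | zero => intro _; simp [x, hI.apply_self ha]
    | succ j ih =>
      intro hj
      have hxj := gridPoint_mem_Icc ha hb (Nat.le_of_succ_le hj)
      have hxj' := gridPoint_mem_Icc ha hb hj
      calc ‖I a (x (j + 1)) - ∑ k ∈ Finset.range (j + 1), I (x k) (x (k + 1))‖
          = ‖(I a (x j) - ∑ k ∈ Finset.range j, I (x k) (x (k + 1)))
              + (I a (x (j + 1)) - I a (x j) - I (x j) (x (j + 1)))‖ := by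
            rw [Finset.sum_range_succ]
            congr 1
            abel
        _ ≤ j * K * |a - b| ^ z + K * |a - b| ^ z :=
            (norm_add_le _ _).trans (add_le_add (ih (Nat.le_of_succ_le hj))
              (hK a ha _ hxj _ hxj' _ (abs_sub_gridPoint_le (Nat.le_of_succ_le hj))
                (abs_gridPoint_sub_gridPoint_succ_le hd)))
        _ = ↑(j + 1) * K * |a - b| ^ z := by push_cast; ring
  simpa [x, gridPoint_self hd] using htelescope d le_rfl

lemma MidpointAdditiveOn.eq_sum_gridPoint (hI : MidpointAdditiveOn T I)
    (hK : GapBounded T z K fun a b c => I a c - I a b - I b c) (hz : 1 < z) {d : ℕ}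
    (hd : d ≠ 0) (ha : a ∈ Icc 0 T) (hb : b ∈ Icc 0 T) :
    I a b = ∑ k ∈ Finset.range d, I (gridPoint a b d k) (gridPoint a b d (k + 1)) :=
  sub_eq_zero.1 <| (hI.sub (hI.sum_gridPoint d)).eq_zero hz
    (fun _ ha _ hb => hI.norm_sub_sum_gridPoint_le hK hd ha hb) ha hb

lemma MidpointAdditiveOn.eq_add_gridPoint (hI : MidpointAdditiveOn T I)
    (hK : GapBounded T z K fun a b c => I a c - I a b - I b c) (hz : 1 < z) {d j : ℕ}
    (hjd : j ≤ d) (ha : a ∈ Icc 0 T) (hb : b ∈ Icc 0 T) :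
    I a b = I a (gridPoint a b d j) + I (gridPoint a b d j) b := by
  rcases eq_or_ne j 0 with rfl | hj
  · simp [hI.apply_self ha]
  rcases hjd.eq_or_lt with rfl | hjd
  · simp [gridPoint_self hj, hI.apply_self hb]
  have hd : d ≠ 0 := (Nat.zero_lt_of_lt hjd).ne'
  have hu := gridPoint_mem_Icc ha hb hjd.le
  have hsplit := Finset.sum_range_add
    (fun k => I (gridPoint a b d k) (gridPoint a b d (k + 1))) j (d - j)
  rw [Nat.add_sub_cancel' hjd.le] at hsplit
  rw [hI.eq_sum_gridPoint hK hz hd ha hb, hI.eq_sum_gridPoint hK hz hj ha hu,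
    hI.eq_sum_gridPoint hK hz (Nat.sub_pos_of_lt hjd).ne' hu hb, hsplit]
  congr 1
  · refine Finset.sum_congr rfl fun k _ => ?_
    rw [gridPoint_gridPoint_left hj hd, gridPoint_gridPoint_left hj hd]
  · refine Finset.sum_congr rfl fun k _ => ?_
    rw [gridPoint_gridPoint_right hjd, gridPoint_gridPoint_right hjd, add_assoc]

/-- The points `gridPoint a b n ⌊θ n⌋` approach `u = a + θ (b - a)`, and continuity passes the
identity from them to `u`. -/
lemma MidpointAdditiveOn.eq_add_of_mem_Icc (hI : MidpointAdditiveOn T I)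
    (hK : GapBounded T z K fun a b c => I a c - I a b - I b c) (hz : 1 < z)
    (hcont : ContinuousOn (fun p : ℝ × ℝ => I p.1 p.2) (Icc 0 T ×ˢ Icc 0 T))
    (ha : a ∈ Icc 0 T) (hb : b ∈ Icc 0 T) {u : ℝ} (hu : u ∈ Icc a b) :
    I a b = I a u + I u b := by
  have huT : u ∈ Icc 0 T := ⟨ha.1.trans hu.1, hu.2.trans hb.2⟩
  rcases hu.1.eq_or_lt with rfl | hau
  · simp [hI.apply_self ha]
  have hab : 0 < b - a := by linarith [hu.2]
  set θ := (u - a) / (b - a) with hθ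
  have hθ0 : 0 ≤ θ := div_nonneg (by linarith) hab.le
  have hθ1 : θ ≤ 1 := div_le_one_of_le₀ (by linarith [hu.2]) hab.le
  have hj : ∀ n : ℕ, ⌊θ * n⌋₊ ≤ n := fun n =>
    Nat.floor_le_of_le (mul_le_of_le_one_left (Nat.cast_nonneg n) hθ1)
  have hlim : Tendsto (fun n : ℕ => gridPoint a b n ⌊θ * n⌋₊) atTop (𝓝[Icc 0 T] u) := by
    refine tendsto_nhdsWithin_iff.2
      ⟨?_, Eventually.of_forall fun n => gridPoint_mem_Icc ha hb (hj n)⟩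
    have h := (((tendsto_nat_floor_mul_div_atTop hθ0).comp
      tendsto_natCast_atTop_atTop).mul_const (b - a)).const_add a
    convert h using 1
    · funext n
      simp only [gridPoint, Function.comp_apply]
      ring
    · rw [hθ, div_mul_cancel₀ _ hab.ne', add_sub_cancel]
  have hcont_u : ContinuousWithinAt (fun x => I a x + I x b) (Icc 0 T) u :=
    ((hcont.comp (continuous_const.prodMk continuous_id).continuousOn fun _ hx => ⟨ha, hx⟩).add
      (hcont.comp (continuous_id.prodMk continuous_const).continuousOn
        fun _ hx => ⟨hx, hb⟩)) u huT
  exact tendsto_nhds_unique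
    (tendsto_const_nhds.congr fun n => hI.eq_add_gridPoint hK hz (hj n) ha hb)
    (hcont_u.tendsto.comp hlim)

lemma MidpointAdditiveOn.add_swap_eq_zero (hI : MidpointAdditiveOn T I)
    (hK : GapBounded T z K fun a b c => I a c - I a b - I b c) (hz : 1 < z)
    (ha : a ∈ Icc 0 T) (hb : b ∈ Icc 0 T) : I a b + I b a = 0 := by
  refine hI.add_swap.eq_zero (K := K) hz (fun a ha b hb => ?_) ha hb
  have h := hK a ha b hb a ha |a - b| le_rfl (abs_sub_comm b a).le
  beta_reduce at h
  rwa [hI.apply_self ha, zero_sub, sub_eq_add_neg, ← neg_add, norm_neg] at h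

theorem MidpointAdditiveOn.eq_add (hI : MidpointAdditiveOn T I)
    (hK : GapBounded T z K fun a b c => I a c - I a b - I b c) (hz : 1 < z)
    (hcont : ContinuousOn (fun p : ℝ × ℝ => I p.1 p.2) (Icc 0 T ×ˢ Icc 0 T))
    {t u s : ℝ} (ht : t ∈ Icc 0 T) (hu : u ∈ Icc 0 T) (hs : s ∈ Icc 0 T) :
    I t s = I t u + I u s := by
  have h0 : (0 : ℝ) ∈ Icc 0 T := ⟨le_rfl, ht.1.trans ht.2⟩
  have hprimitive : ∀ a ∈ Icc 0 T, ∀ b ∈ Icc 0 T, I a b = I 0 b - I 0 a := by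
    intro a ha b hb
    rcases le_total a b with hab | hba
    · rw [hI.eq_add_of_mem_Icc hK hz hcont h0 hb ⟨ha.1, hab⟩]
      abel
    · rw [hI.eq_add_of_mem_Icc hK hz hcont h0 ha ⟨hb.1, hba⟩,
        eq_neg_of_add_eq_zero_left (hI.add_swap_eq_zero hK hz ha hb)]
      abel
  rw [hprimitive t ht s hs, hprimitive t ht u hu, hprimitive u hu s hs]
  abel

end Additivity

theorem GapBounded.sew_coboundary [CompleteSpace V] {f : ℝ → ℝ → ℝ → V} (hz : 1 < z)
    (hS : 0 ≤ S) (hf : GapBounded T z S f)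
    (hcocycle : ∀ a b c d : ℝ, a ∈ Icc 0 T → b ∈ Icc 0 T → c ∈ Icc 0 T → d ∈ Icc 0 T →
      f b c d - f a c d + f a b d - f a b c = 0)
    (hf_cont : ContinuousOn (fun q : ℝ × ℝ × ℝ => f q.1 q.2.1 q.2.2)
      (Icc 0 T ×ˢ Icc 0 T ×ˢ Icc 0 T))
    (hsew : ContinuousOn (fun p : ℝ × ℝ => sew f p.1 p.2) (Icc 0 T ×ˢ Icc 0 T))
    {t u s : ℝ} (ht : t ∈ Icc 0 T) (hu : u ∈ Icc 0 T) (hs : s ∈ Icc 0 T) :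
    f t u s = sew f t s - sew f t u - sew f u s := by
  have h0 : (0 : ℝ) ∈ Icc 0 T := ⟨le_rfl, ht.1.trans ht.2⟩
  have hδ : ∀ a ∈ Icc 0 T, ∀ b ∈ Icc 0 T, ∀ c ∈ Icc 0 T,
      f a b c = f 0 b c - f 0 a c + f 0 a b := fun a ha b hb c hc => by
    linear_combination (norm := module) hcocycle 0 a b c h0 ha hb hc
  let I : ℝ → ℝ → V := fun a b => -f 0 a b - sew f a b
  have hmid : MidpointAdditiveOn T I := fun a ha b hb => by
    simp only [I]
    rw [hf.sew_eq_add_sew hz ha hb, hδ a ha _ (add_div_two_mem_Icc ha hb) b hb]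
    abel
  set C := (2 ^ z - 2)⁻¹ * S
  have hC0 : 0 ≤ C := mul_nonneg (inv_nonneg.2 (sub_pos.2 (two_lt_two_rpow hz)).le) hS
  have hK : GapBounded T z (S + (2 ^ z + 2) * C) fun a b c => I a c - I a b - I b c := by
    intro a ha b hb c hc D hab hbc
    have hD : 0 ≤ D := (abs_nonneg _).trans hab
    have hac : |a - c| ≤ 2 * D := (abs_sub_le a b c).trans (by linarith)
    have e : I a c - I a b - I b c = f a b c - sew f a c + sew f a b + sew f b c := by
      simp only [I]
      rw [hδ a ha b hb c hc]
      abel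
    have hsew_le : ∀ x ∈ Icc 0 T, ∀ y ∈ Icc 0 T, ∀ E, |x - y| ≤ E → ‖sew f x y‖ ≤ C * E ^ z :=
      fun x hx y hy E hE => (hf.norm_sew_le hz hx hy).trans <| by gcongr
    calc ‖I a c - I a b - I b c‖
        ≤ ‖f a b c‖ + ‖sew f a c‖ + ‖sew f a b‖ + ‖sew f b c‖ := by
          rw [e]
          exact norm_add₃_le.trans (by gcongr; exact norm_sub_le _ _)
      _ ≤ S * D ^ z + C * (2 * D) ^ z + C * D ^ z + C * D ^ z := by
          gcongr
          · exact hf a ha b hb c hc D hab hbc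
          · exact hsew_le a ha c hc _ hac
          · exact hsew_le a ha b hb _ hab
          · exact hsew_le b hb c hc _ hbc
      _ = (S + (2 ^ z + 2) * C) * D ^ z := by
          rw [Real.mul_rpow zero_le_two hD]
          ring
  have hf0 : ContinuousOn (fun p : ℝ × ℝ => f 0 p.1 p.2) (Icc 0 T ×ˢ Icc 0 T) :=
    hf_cont.comp (continuous_const.prodMk continuous_id).continuousOn fun _ hp => ⟨h0, hp⟩
  have hadd := hmid.eq_add hK hz (hf0.neg.sub hsew) ht hu hs
  simp only [I] at hadd
  rw [hδ t ht u hu s hs]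
  linear_combination (norm := module) hadd

theorem eq_of_coboundary_eq {r r' : ℝ → ℝ → V} {ν K K' : ℝ} (hz : 1 < z) (hν : 1 < ν)
    (hcob : ∀ t u s : ℝ, t ∈ Icc 0 T → u ∈ Icc 0 T → s ∈ Icc 0 T →
      r' t s - r' t u - r' u s = r t s - r t u - r u s)
    (hr : ∀ t s : ℝ, t ∈ Icc 0 T → s ∈ Icc 0 T → ‖r t s‖ ≤ K * |t - s| ^ z)
    (hr' : ∀ t s : ℝ, t ∈ Icc 0 T → s ∈ Icc 0 T → ‖r' t s‖ ≤ K' * |t - s| ^ ν)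
    {t s : ℝ} (ht : t ∈ Icc 0 T) (hs : s ∈ Icc 0 T) : r' t s = r t s := by
  have hmid : MidpointAdditiveOn T fun a b => r' a b - r a b := fun a ha b hb => by
    linear_combination (norm := module) hcob a _ b ha (add_div_two_mem_Icc ha hb) hb
  set μ := min z ν
  have hμ : 1 < μ := lt_min hz hν
  refine sub_eq_zero.1 <| hmid.eq_zero (K := |K'| * T ^ (ν - μ) + |K| * T ^ (z - μ)) hμ
    (fun a ha b hb => ?_) ht hs
  have hab := abs_sub_le_of_mem_Icc ha hb
  calc ‖r' a b - r a b‖ ≤ K' * |a - b| ^ ν + K * |a - b| ^ z :=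
        (norm_sub_le _ _).trans (add_le_add (hr' a b ha hb) (hr a b ha hb))
    _ ≤ |K'| * (T ^ (ν - μ) * |a - b| ^ μ) + |K| * (T ^ (z - μ) * |a - b| ^ μ) := by
        gcongr
        · exact le_abs_self K'
        · exact rpow_le_mul_rpow_of_le (abs_nonneg _) hab (by linarith) (min_le_right z ν)
        · exact le_abs_self K
        · exact rpow_le_mul_rpow_of_le (abs_nonneg _) hab (by linarith) (min_le_left z ν)
    _ = (|K'| * T ^ (ν - μ) + |K| * T ^ (z - μ)) * |a - b| ^ μ := by ring

end

theorem stmt16_general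
    {V : Type*} [NormedAddCommGroup V] [CompleteSpace V]
    (T : ℝ) (z₁ : ℝ) (hz₁ : 1 < z₁) (l : ℕ)
    (h : ℝ → ℝ → ℝ → (Fin l → ℝ) → V)
    -- h ∈ 𝒞𝒞_{3,l}(V)
    (hhc : ContinuousOn
      (fun q : (ℝ × ℝ × ℝ) × (Fin l → ℝ) => h q.1.1 q.1.2.1 q.1.2.2 q.2)
      ((Icc 0 T ×ˢ Icc 0 T ×ˢ Icc 0 T) ×ˢ cube T l))
    (hh0 : ∀ t u s : ℝ, t ∈ Icc 0 T → u ∈ Icc 0 T → s ∈ Icc 0 T →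
      ∀ τ ∈ cube T l,
      ((t = u ∨ u = s) ∨ ∃ i j : Fin l, (j : ℕ) = (i : ℕ) + 1 ∧ τ i = τ j) →
      h t u s τ = 0)
    -- δ₁h = 0
    (hcocycle : ∀ a b c d : ℝ, a ∈ Icc 0 T → b ∈ Icc 0 T → c ∈ Icc 0 T →
      d ∈ Icc 0 T → ∀ τ ∈ cube T l,
      h b c d τ - h a c d τ + h a b d τ - h a b c τ = 0)
    -- M = sup_τ ‖h(·,τ)‖_{z₁} < ∞
    (hM : ∃ M : ℝ, ∀ τ ∈ cube T l,
      ∃ (N : ℕ) (hd : Fin N → ℝ → ℝ → ℝ → V) (C ρ : Fin N → ℝ),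
        (∀ k, 0 ≤ C k) ∧ (∀ k, ρ k ∈ Set.Ioo (0:ℝ) z₁) ∧ (∑ k, C k) ≤ M ∧
        (∀ t u s : ℝ, t ∈ Icc 0 T → u ∈ Icc 0 T → s ∈ Icc 0 T →
          h t u s τ = ∑ k, hd k t u s) ∧
        (∀ k, ∀ t u s : ℝ, t ∈ Icc 0 T → u ∈ Icc 0 T → s ∈ Icc 0 T →
          ‖hd k t u s‖ ≤ C k * |t - u| ^ (ρ k) * |u - s| ^ (z₁ - ρ k))) :
    ∃ r : ℝ → ℝ → (Fin l → ℝ) → V,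
      -- r ∈ 𝒞𝒞_{2,l}(V)
      (ContinuousOn (fun q : (ℝ × ℝ) × (Fin l → ℝ) => r q.1.1 q.1.2 q.2)
        ((Icc 0 T ×ˢ Icc 0 T) ×ˢ cube T l) ∧
        ∀ t s : ℝ, t ∈ Icc 0 T → s ∈ Icc 0 T → ∀ τ ∈ cube T l,
          (t = s ∨ ∃ i j : Fin l, (j : ℕ) = (i : ℕ) + 1 ∧ τ i = τ j) →
          r t s τ = 0) ∧
      -- δ₁r = h
      (∀ t u s : ℝ, t ∈ Icc 0 T → u ∈ Icc 0 T → s ∈ Icc 0 T → ∀ τ ∈ cube T l,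
        h t u s τ = r t s τ - r t u τ - r u s τ) ∧
      -- slices have finite ν-norm, ν > 1
      (∀ τ ∈ cube T l, ∃ ν > (1:ℝ), ∃ K : ℝ, ∀ t s : ℝ, t ∈ Icc 0 T → s ∈ Icc 0 T →
        ‖r t s τ‖ ≤ K * |t - s| ^ ν) ∧
      -- quantitative bound, for every decomposition of each slice
      (∀ τ ∈ cube T l,
        ∀ (N : ℕ) (hd : Fin N → ℝ → ℝ → ℝ → V) (C ρ : Fin N → ℝ),
        (∀ k, 0 ≤ C k) → (∀ k, ρ k ∈ Set.Ioo (0:ℝ) z₁) →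
        (∀ t u s : ℝ, t ∈ Icc 0 T → u ∈ Icc 0 T → s ∈ Icc 0 T →
          h t u s τ = ∑ k, hd k t u s) →
        (∀ k, ∀ t u s : ℝ, t ∈ Icc 0 T → u ∈ Icc 0 T → s ∈ Icc 0 T →
          ‖hd k t u s‖ ≤ C k * |t - u| ^ (ρ k) * |u - s| ^ (z₁ - ρ k)) →
        ∀ t s : ℝ, t ∈ Icc 0 T → s ∈ Icc 0 T →
          ‖r t s τ‖ ≤ ((2:ℝ) ^ z₁ - 2)⁻¹ * (∑ k, C k) * |t - s| ^ z₁) ∧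
      -- uniqueness
      (∀ r' : ℝ → ℝ → (Fin l → ℝ) → V,
        (ContinuousOn (fun q : (ℝ × ℝ) × (Fin l → ℝ) => r' q.1.1 q.1.2 q.2)
          ((Icc 0 T ×ˢ Icc 0 T) ×ˢ cube T l) ∧
          ∀ t s : ℝ, t ∈ Icc 0 T → s ∈ Icc 0 T → ∀ τ ∈ cube T l,
            (t = s ∨ ∃ i j : Fin l, (j : ℕ) = (i : ℕ) + 1 ∧ τ i = τ j) →
            r' t s τ = 0) →
        (∀ t u s : ℝ, t ∈ Icc 0 T → u ∈ Icc 0 T → s ∈ Icc 0 T → ∀ τ ∈ cube T l,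
          h t u s τ = r' t s τ - r' t u τ - r' u s τ) →
        (∀ τ ∈ cube T l, ∃ ν > (1:ℝ), ∃ K : ℝ,
          ∀ t s : ℝ, t ∈ Icc 0 T → s ∈ Icc 0 T → ‖r' t s τ‖ ≤ K * |t - s| ^ ν) →
        ∀ t s : ℝ, t ∈ Icc 0 T → s ∈ Icc 0 T → ∀ τ ∈ cube T l,
          r' t s τ = r t s τ) := by
  obtain ⟨M, hM⟩ := hM
  have hslice : ∀ τ ∈ cube T l,
      ∃ S, 0 ≤ S ∧ S ≤ M ∧ GapBounded T z₁ S fun x y w => h x y w τ := fun τ hτ => by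
    obtain ⟨N, hd, C, ρ, hC, hρ, hCM, hdec, hbd⟩ := hM τ hτ
    exact ⟨∑ k, C k, Finset.sum_nonneg fun k _ => hC k, hCM,
      gapBounded_of_decomposition hd C ρ hC hρ hdec hbd⟩
  let r : ℝ → ℝ → (Fin l → ℝ) → V := fun t s τ => sew (fun x y w => h x y w τ) t s
  have hr_cont : ContinuousOn (fun q : (ℝ × ℝ) × (Fin l → ℝ) => r q.1.1 q.1.2 q.2)
      ((Icc 0 T ×ˢ Icc 0 T) ×ˢ cube T l) :=
    continuousOn_sew hz₁ hhc fun τ hτ => by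
      obtain ⟨S, -, hSM, hS⟩ := hslice τ hτ
      exact hS.mono hSM
  have hr_cob : ∀ t u s : ℝ, t ∈ Icc 0 T → u ∈ Icc 0 T → s ∈ Icc 0 T → ∀ τ ∈ cube T l,
      h t u s τ = r t s τ - r t u τ - r u s τ := fun t u s ht hu hs τ hτ => by
    obtain ⟨S, hS0, -, hS⟩ := hslice τ hτ
    exact hS.sew_coboundary hz₁ hS0 (fun a b c d ha hb hc hd => hcocycle a b c d ha hb hc hd τ hτ)
      (hhc.slice hτ) (hr_cont.slice hτ) ht hu hs
  have hr_holder : ∀ τ ∈ cube T l, ∃ K : ℝ, ∀ t s : ℝ, t ∈ Icc 0 T → s ∈ Icc 0 T →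
      ‖r t s τ‖ ≤ K * |t - s| ^ z₁ := fun τ hτ => by
    obtain ⟨S, -, -, hS⟩ := hslice τ hτ
    exact ⟨_, fun t s ht hs => hS.norm_sew_le hz₁ ht hs⟩
  refine ⟨r, ⟨hr_cont, ?_⟩, hr_cob, fun τ hτ => ⟨z₁, hz₁, hr_holder τ hτ⟩, ?_, ?_⟩
  · rintro t s ht hs τ hτ (rfl | hτ0)
    · exact sew_self (hh0 t t t ht ht ht τ hτ (Or.inl (Or.inl rfl)))
    · exact sew_eq_zero (fun x hx y hy w hw => hh0 x y w hx hy hw τ hτ (Or.inr hτ0)) ht hs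
  · intro τ hτ N hd C ρ hC hρ hdec hbd t s ht hs
    exact (gapBounded_of_decomposition hd C ρ hC hρ hdec hbd).norm_sew_le hz₁ ht hs
  · rintro r' - hr'_cob hr'_holder t s ht hs τ hτ
    obtain ⟨K, hK⟩ := hr_holder τ hτ
    obtain ⟨ν, hν, K', hK'⟩ := hr'_holder τ hτ
    refine eq_of_coboundary_eq hz₁ hν (fun a b c ha hb hc => ?_) hK hK' ht hs
    rw [← hr_cob a b c ha hb hc τ hτ, ← hr'_cob a b c ha hb hc τ hτ]

/-- **The partial sewing map `Λ₁` on `𝒞𝒞_{3,l}(V)`.**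
Let `z₁ > 1` and let `h ∈ 𝒞𝒞_{3,l}(V)` satisfy `δ₁h = 0` and
`sup_τ ‖h(·,τ)‖_{z₁} < ∞` (witnessed by a uniform bound `M` over decompositions of the
slices).  Then there is a unique `Λ₁h ∈ 𝒞𝒞_{2,l}(V)` with `δ₁(Λ₁h) = h` whose slices
have finite `ν`-norm for some `ν > 1`; moreover
`‖(Λ₁h)(·,τ)‖_{z₁} ≤ (2^{z₁}−2)⁻¹ ‖h(·,τ)‖_{z₁}` for every `τ` (the bound holding for
every decomposition of the slice `h(·,τ)`). -/
theorem stmt16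
    {V : Type*} [NormedAddCommGroup V] [NormedSpace ℝ V] [CompleteSpace V]
    (T : ℝ) (hT : 0 < T) (z₁ : ℝ) (hz₁ : 1 < z₁) (l : ℕ) (hl : 1 ≤ l)
    (h : ℝ → ℝ → ℝ → (Fin l → ℝ) → V)
    -- h ∈ 𝒞𝒞_{3,l}(V)
    (hhc : ContinuousOn
      (fun q : (ℝ × ℝ × ℝ) × (Fin l → ℝ) => h q.1.1 q.1.2.1 q.1.2.2 q.2)
      ((Icc 0 T ×ˢ Icc 0 T ×ˢ Icc 0 T) ×ˢ cube T l))
    (hh0 : ∀ t u s : ℝ, t ∈ Icc 0 T → u ∈ Icc 0 T → s ∈ Icc 0 T →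
      ∀ τ ∈ cube T l,
      ((t = u ∨ u = s) ∨ ∃ i j : Fin l, (j : ℕ) = (i : ℕ) + 1 ∧ τ i = τ j) →
      h t u s τ = 0)
    -- δ₁h = 0
    (hcocycle : ∀ a b c d : ℝ, a ∈ Icc 0 T → b ∈ Icc 0 T → c ∈ Icc 0 T →
      d ∈ Icc 0 T → ∀ τ ∈ cube T l,
      h b c d τ - h a c d τ + h a b d τ - h a b c τ = 0)
    -- M = sup_τ ‖h(·,τ)‖_{z₁} < ∞
    (hM : ∃ M : ℝ, ∀ τ ∈ cube T l,
      ∃ (N : ℕ) (hd : Fin N → ℝ → ℝ → ℝ → V) (C ρ : Fin N → ℝ),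
        (∀ k, 0 ≤ C k) ∧ (∀ k, ρ k ∈ Set.Ioo (0:ℝ) z₁) ∧ (∑ k, C k) ≤ M ∧
        (∀ t u s : ℝ, t ∈ Icc 0 T → u ∈ Icc 0 T → s ∈ Icc 0 T →
          h t u s τ = ∑ k, hd k t u s) ∧
        (∀ k, ∀ t u s : ℝ, t ∈ Icc 0 T → u ∈ Icc 0 T → s ∈ Icc 0 T →
          ‖hd k t u s‖ ≤ C k * |t - u| ^ (ρ k) * |u - s| ^ (z₁ - ρ k))) :
    ∃ r : ℝ → ℝ → (Fin l → ℝ) → V,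
      -- r ∈ 𝒞𝒞_{2,l}(V)
      (ContinuousOn (fun q : (ℝ × ℝ) × (Fin l → ℝ) => r q.1.1 q.1.2 q.2)
        ((Icc 0 T ×ˢ Icc 0 T) ×ˢ cube T l) ∧
        ∀ t s : ℝ, t ∈ Icc 0 T → s ∈ Icc 0 T → ∀ τ ∈ cube T l,
          (t = s ∨ ∃ i j : Fin l, (j : ℕ) = (i : ℕ) + 1 ∧ τ i = τ j) →
          r t s τ = 0) ∧
      -- δ₁r = h
      (∀ t u s : ℝ, t ∈ Icc 0 T → u ∈ Icc 0 T → s ∈ Icc 0 T → ∀ τ ∈ cube T l,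
        h t u s τ = r t s τ - r t u τ - r u s τ) ∧
      -- slices have finite ν-norm, ν > 1
      (∀ τ ∈ cube T l, ∃ ν > (1:ℝ), ∃ K : ℝ, ∀ t s : ℝ, t ∈ Icc 0 T → s ∈ Icc 0 T →
        ‖r t s τ‖ ≤ K * |t - s| ^ ν) ∧
      -- quantitative bound, for every decomposition of each slice
      (∀ τ ∈ cube T l,
        ∀ (N : ℕ) (hd : Fin N → ℝ → ℝ → ℝ → V) (C ρ : Fin N → ℝ),
        (∀ k, 0 ≤ C k) → (∀ k, ρ k ∈ Set.Ioo (0:ℝ) z₁) →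
        (∀ t u s : ℝ, t ∈ Icc 0 T → u ∈ Icc 0 T → s ∈ Icc 0 T →
          h t u s τ = ∑ k, hd k t u s) →
        (∀ k, ∀ t u s : ℝ, t ∈ Icc 0 T → u ∈ Icc 0 T → s ∈ Icc 0 T →
          ‖hd k t u s‖ ≤ C k * |t - u| ^ (ρ k) * |u - s| ^ (z₁ - ρ k)) →
        ∀ t s : ℝ, t ∈ Icc 0 T → s ∈ Icc 0 T →
          ‖r t s τ‖ ≤ ((2:ℝ) ^ z₁ - 2)⁻¹ * (∑ k, C k) * |t - s| ^ z₁) ∧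
      -- uniqueness
      (∀ r' : ℝ → ℝ → (Fin l → ℝ) → V,
        (ContinuousOn (fun q : (ℝ × ℝ) × (Fin l → ℝ) => r' q.1.1 q.1.2 q.2)
          ((Icc 0 T ×ˢ Icc 0 T) ×ˢ cube T l) ∧
          ∀ t s : ℝ, t ∈ Icc 0 T → s ∈ Icc 0 T → ∀ τ ∈ cube T l,
            (t = s ∨ ∃ i j : Fin l, (j : ℕ) = (i : ℕ) + 1 ∧ τ i = τ j) →
            r' t s τ = 0) →
        (∀ t u s : ℝ, t ∈ Icc 0 T → u ∈ Icc 0 T → s ∈ Icc 0 T → ∀ τ ∈ cube T l,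
          h t u s τ = r' t s τ - r' t u τ - r' u s τ) →
        (∀ τ ∈ cube T l, ∃ ν > (1:ℝ), ∃ K : ℝ,
          ∀ t s : ℝ, t ∈ Icc 0 T → s ∈ Icc 0 T → ‖r' t s τ‖ ≤ K * |t - s| ^ ν) →
        ∀ t s : ℝ, t ∈ Icc 0 T → s ∈ Icc 0 T → ∀ τ ∈ cube T l,
          r' t s τ = r t s τ) :=
  stmt16_general T z₁ hz₁ l h hhc hh0 hcocycle hM
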